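/- arXiv:0708.3871 — 2 statements merged into one kernel-verified Lean document; each statement's English description precedes it below -/
import Mathlib

section
/- Let G be a locally compact NSS local group. Then there is a neighborhood V of 1 with V ⊆ U₂ such that for all x,y ∈ V, if x² = y² then x = y (note x² and y² are defined since V ⊆ U₂). -/
open scoped Topology Manifold ENNReal

/-- A local group in the sense of Goldbring's "Hilbert's Fifth Problem for Local Groups":
a Hausdorff-intended topological space `G` with a distinguished element `one`, a partial
inversion `inv` defined (i.e. meaningful) on the open set `Lambda`, and a partial product
`mul` meaningful on the open set `Omega`. -/
structure LocalGroup (G : Type*) [TopologicalSpace G] where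
  one : G
  Lambda : Set G
  Omega : Set (G × G)
  inv : G → G
  mul : G → G → G
  isOpen_Lambda : IsOpen Lambda
  isOpen_Omega : IsOpen Omega
  one_mem_Lambda : one ∈ Lambda
  pair_one_left : ∀ x : G, (one, x) ∈ Omega
  pair_one_right : ∀ x : G, (x, one) ∈ Omega
  continuousOn_inv : ContinuousOn inv Lambda
  continuousOn_mul : ContinuousOn (fun q : G × G => mul q.1 q.2) Omega
  one_mul : ∀ x : G, mul one x = x
  mul_one : ∀ x : G, mul x one = x
  mem_inv_right : ∀ x ∈ Lambda, (x, inv x) ∈ Omega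
  mem_inv_left : ∀ x ∈ Lambda, (inv x, x) ∈ Omega
  mul_inv_self : ∀ x ∈ Lambda, mul x (inv x) = one
  inv_mul_self : ∀ x ∈ Lambda, mul (inv x) x = one
  assoc : ∀ x y z : G, (x, y) ∈ Omega → (y, z) ∈ Omega → (mul x y, z) ∈ Omega →
    (x, mul y z) ∈ Omega → mul (mul x y) z = mul x (mul y z)

namespace LocalGroup

variable {G : Type*} {G' : Type*} [TopologicalSpace G] [TopologicalSpace G']

/-- The standing conventions of the paper: `Λ = G`, and whenever `(g,h) ∈ Ω` also
`(h⁻¹, g⁻¹) ∈ Ω` with `(gh)⁻¹ = h⁻¹g⁻¹`. -/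
def Std (L : LocalGroup G) : Prop :=
  L.Lambda = Set.univ ∧
    ∀ g h : G, (g, h) ∈ L.Omega →
      (L.inv h, L.inv g) ∈ L.Omega ∧ L.inv (L.mul g h) = L.mul (L.inv h) (L.inv g)

/-- A symmetric subset: contained in the domain of inversion and stable under it. -/
def IsSymmetric (L : LocalGroup G) (S : Set G) : Prop :=
  S ⊆ L.Lambda ∧ L.inv '' S = S

/-- A subgroup of a local group. -/
def IsSubgroup (L : LocalGroup G) (H : Set G) : Prop :=
  L.one ∈ H ∧ H ⊆ L.Lambda ∧ (∀ x ∈ H, ∀ y ∈ H, (x, y) ∈ L.Omega) ∧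
    (∀ x ∈ H, L.inv x ∈ H) ∧ ∀ x ∈ H, ∀ y ∈ H, L.mul x y ∈ H

/-- No small subgroups. -/
def NSS (L : LocalGroup G) : Prop :=
  ∃ U ∈ 𝓝 L.one, ∀ H : Set G, L.IsSubgroup H → H ⊆ U → H = {L.one}

/-- No small connected subgroups. -/
def NSCS (L : LocalGroup G) : Prop :=
  ∃ U ∈ 𝓝 L.one, ∀ H : Set G, L.IsSubgroup H → IsConnected H → H ⊆ U → H = {L.one}

/-- `(a₁, …, aₙ)` represents `b`: all ways of multiplying the list are defined and equal `b`.
By convention the empty list represents `one`. -/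
def Represents (L : LocalGroup G) : List G → G → Prop
  | [], b => b = L.one
  | [a], b => b = a
  | a :: c :: l, b =>
      ∀ i : ℕ, 1 ≤ i → i < (a :: c :: l).length →
        ∃ b₁ b₂ : G, L.Represents ((a :: c :: l).take i) b₁ ∧
          L.Represents ((a :: c :: l).drop i) b₂ ∧ (b₁, b₂) ∈ L.Omega ∧ L.mul b₁ b₂ = b
termination_by l => l.length
decreasing_by
  all_goals simp only [List.length_cons, List.length_take, List.length_drop] at *
  all_goals omega

/-- `A^n`: all products of `n` elements of `A` (only meaningful when such products are defined). -/
def setPow (L : LocalGroup G) (A : Set G) (n : ℕ) : Set G :=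
  {b | ∃ l : List G, l.length = n ∧ (∀ a ∈ l, a ∈ A) ∧ L.Represents l b}

/-- A chain `U₁ ⊇ U₂ ⊇ ⋯` of symmetric open neighborhoods of `1` such that products of `n`
elements of `Uₙ` are defined (the sets `𝒰ₙ` of the paper). -/
def IsProdChain (L : LocalGroup G) (U : ℕ → Set G) : Prop :=
  ∀ n : ℕ, 1 ≤ n →
    IsOpen (U n) ∧ L.one ∈ U n ∧ L.IsSymmetric (U n) ∧ U (n + 1) ⊆ U n ∧
      ∀ l : List G, l.length = n → (∀ a ∈ l, a ∈ U n) → ∃ b, L.Represents l b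

/-- `a^k` is defined and equal to `b`, for `k : ℤ` (with `a^(-n) := (a⁻¹)^n`). -/
def zpowRep (L : LocalGroup G) (a : G) : ℤ → G → Prop
  | Int.ofNat n, b => L.Represents (List.replicate n a) b
  | Int.negSucc n, b => L.Represents (List.replicate (n + 1) (L.inv a)) b

/-- A special neighborhood (relative to a product chain `U`): a compact symmetric
neighborhood of `1` contained in `U 2`, containing no nontrivial subgroup, on which
squaring is injective. -/
def IsSpecialNbhd (L : LocalGroup G) (U : ℕ → Set G) (SU : Set G) : Prop :=
  IsCompact SU ∧ SU ∈ 𝓝 L.one ∧ L.IsSymmetric SU ∧ SU ⊆ U 2 ∧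
    (∀ H : Set G, L.IsSubgroup H → H ⊆ SU → H = {L.one}) ∧
    ∀ x ∈ SU, ∀ y ∈ SU, L.mul x x = L.mul y y → x = y

/-- `Λ_U` for the restriction `G|U`. -/
def restLambda (L : LocalGroup G) (U : Set G) : Set G := L.Lambda ∩ U ∩ L.inv ⁻¹' U

/-- `Ω_U` for the restriction `G|U`. -/
def restOmega (L : LocalGroup G) (U : Set G) : Set (G × G) :=
  {q | q ∈ L.Omega ∧ q.1 ∈ U ∧ q.2 ∈ U ∧ L.mul q.1 q.2 ∈ U}

/-- A morphism of local groups `L → L'`. -/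
def IsMorphism (L : LocalGroup G) (L' : LocalGroup G') (f : G → G') : Prop :=
  Continuous f ∧ f L.one = L'.one ∧
    (∀ x ∈ L.Lambda, f x ∈ L'.Lambda ∧ f (L.inv x) = L'.inv (f x)) ∧
    ∀ x y : G, (x, y) ∈ L.Omega → ((f x, f y) ∈ L'.Omega ∧ f (L.mul x y) = L'.mul (f x) (f y))

/-- `f` is a morphism of local groups `G|U → G'|U'` between restrictions. -/
def IsRestMorphism (L : LocalGroup G) (L' : LocalGroup G') (U : Set G) (U' : Set G')
    (f : G → G') : Prop :=
  ContinuousOn f U ∧ Set.MapsTo f U U' ∧ f L.one = L'.one ∧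
    (∀ x ∈ L.restLambda U, f x ∈ L'.restLambda U' ∧ f (L.inv x) = L'.inv (f x)) ∧
    ∀ x y : G, (x, y) ∈ L.restOmega U →
      ((f x, f y) ∈ L'.restOmega U' ∧ f (L.mul x y) = L'.mul (f x) (f y))

/-- Local isomorphism: a homeomorphism between open neighborhoods of the identities which
is a morphism of restrictions in both directions. -/
def LocallyIsomorphic (L : LocalGroup G) (L' : LocalGroup G') : Prop :=
  ∃ (U : Set G) (U' : Set G') (f : G → G') (g : G' → G),
    IsOpen U ∧ L.one ∈ U ∧ IsOpen U' ∧ L'.one ∈ U' ∧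
      Set.BijOn f U U' ∧ (∀ x ∈ U, g (f x) = x) ∧ (∀ y ∈ U', f (g y) = y) ∧
      L.IsRestMorphism L' U U' f ∧ L'.IsRestMorphism L U' U g

/-- A topological group regarded as a local group with `Λ = G` and `Ω = G × G`. -/
def ofGroup (H : Type*) [TopologicalSpace H] [Group H] [IsTopologicalGroup H] : LocalGroup H where
  one := 1
  Lambda := Set.univ
  Omega := Set.univ
  inv := fun x => x⁻¹
  mul := fun x y => x * y
  isOpen_Lambda := isOpen_univ
  isOpen_Omega := isOpen_univ
  one_mem_Lambda := trivial
  pair_one_left := fun _ => trivial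
  pair_one_right := fun _ => trivial
  continuousOn_inv := continuous_inv.continuousOn
  continuousOn_mul := (continuous_fst.mul continuous_snd).continuousOn
  one_mul := fun x => _root_.one_mul x
  mul_one := fun x => _root_.mul_one x
  mem_inv_right := fun _ _ => trivial
  mem_inv_left := fun _ _ => trivial
  mul_inv_self := fun x _ => mul_inv_cancel x
  inv_mul_self := fun x _ => inv_mul_cancel x
  assoc := fun x y z _ _ _ _ => mul_assoc x y z

/-- A bundled (finite-dimensional, real) Lie group in the Mathlib sense. -/
structure BundledLieGroup : Type 1 where
  n : ℕ
  carrier : Type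
  [ts : TopologicalSpace carrier]
  [t2 : T2Space carrier]
  [grp : Group carrier]
  [tg : IsTopologicalGroup carrier]
  [cs : ChartedSpace (EuclideanSpace ℝ (Fin n)) carrier]
  [lie : LieGroup (𝓡 n) (⊤ : ℕ∞) carrier]

/-- `L` is locally isomorphic to (the local group underlying) a Lie group. -/
def IsLieLocallyIsomorphic (L : LocalGroup G) : Prop :=
  ∃ B : BundledLieGroup,
    letI := B.ts; letI := B.grp; letI := B.tg
    L.LocallyIsomorphic (ofGroup B.carrier)

/-- A local one-parameter subgroup of `L`, with domain `(-r, r)` (where `r ∈ (0,∞]`). -/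
structure LocalOnePS (L : LocalGroup G) where
  r : ℝ≥0∞
  r_pos : 0 < r
  toFun : ℝ → G
  mem_Lambda : ∀ t : ℝ, ENNReal.ofReal |t| < r → toFun t ∈ L.Lambda
  continuousOn : ContinuousOn toFun {t : ℝ | ENNReal.ofReal |t| < r}
  add : ∀ s t : ℝ, ENNReal.ofReal |s| < r → ENNReal.ofReal |t| < r →
    ENNReal.ofReal |s + t| < r →
      (toFun s, toFun t) ∈ L.Omega ∧ toFun (s + t) = L.mul (toFun s) (toFun t)

variable {L : LocalGroup G}

/-- Equivalence (equality of germs at 0) of local one-parameter subgroups. -/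
def OnePSEquiv (X Y : LocalOnePS L) : Prop :=
  ∃ s : ℝ, 0 < s ∧ ENNReal.ofReal s < X.r ∧ ENNReal.ofReal s < Y.r ∧
    ∀ t : ℝ, |t| < s → X.toFun t = Y.toFun t

theorem onePS_exists_small (X : LocalOnePS L) : ∃ s : ℝ, 0 < s ∧ ENNReal.ofReal s < X.r := by
  rcases eq_or_ne X.r ⊤ with h | h
  · exact ⟨1, one_pos, by simp [h]⟩
  · have h0 : X.r ≠ 0 := ne_of_gt X.r_pos
    have htr : 0 < X.r.toReal := ENNReal.toReal_pos h0 h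
    refine ⟨X.r.toReal / 2, by linarith, ?_⟩
    rw [ENNReal.ofReal_lt_iff_lt_toReal (by linarith) h]
    linarith

instance onePSSetoid (L : LocalGroup G) : Setoid (LocalOnePS L) where
  r := OnePSEquiv
  iseqv := by
    constructor
    · intro X
      obtain ⟨s, hs, hsr⟩ := onePS_exists_small X
      exact ⟨s, hs, hsr, hsr, fun _ _ => rfl⟩
    · rintro X Y ⟨s, hs, h1, h2, h3⟩
      exact ⟨s, hs, h2, h1, fun t ht => (h3 t ht).symm⟩
    · rintro X Y Z ⟨s1, hs1, hX1, hY1, hag1⟩ ⟨s2, hs2, hY2, hZ2, hag2⟩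
      refine ⟨min s1 s2, lt_min hs1 hs2, ?_, ?_, fun t ht => ?_⟩
      · exact lt_of_le_of_lt (ENNReal.ofReal_le_ofReal (min_le_left _ _)) hX1
      · exact lt_of_le_of_lt (ENNReal.ofReal_le_ofReal (min_le_right _ _)) hZ2
      · rw [hag1 t (lt_of_lt_of_le ht (min_le_left _ _)),
          hag2 t (lt_of_lt_of_le ht (min_le_right _ _))]

/-- `L(G)`: the set of germs at `0` of local one-parameter subgroups of `L`. -/
abbrev LGQuot (L : LocalGroup G) := Quotient (onePSSetoid L)

/-- The trivial local one-parameter subgroup `O`. -/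
noncomputable def constOnePS (L : LocalGroup G) : LocalOnePS L where
  r := ⊤
  r_pos := by simp
  toFun := fun _ => L.one
  mem_Lambda := fun _ _ => L.one_mem_Lambda
  continuousOn := continuousOn_const
  add := fun s t _ _ _ => ⟨L.pair_one_left L.one, (L.one_mul L.one).symm⟩

/-- The domain of a germ of local one-parameter subgroups: the union of the domains of its
representatives. -/
def germDomain (L : LocalGroup G) (X : LGQuot L) : Set ℝ :=
  {t | ∃ Y : LocalOnePS L, ⟦Y⟧ = X ∧ ENNReal.ofReal |t| < Y.r}

/-- Evaluation of a germ at a point of its domain (junk value outside). This is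
well defined, i.e. independent of the choice of representative, by the basic theory
of local one-parameter subgroups. -/
noncomputable def germEval (L : LocalGroup G) (X : LGQuot L) (t : ℝ) : G := by
  classical exact if h : ∃ Y : LocalOnePS L, ⟦Y⟧ = X ∧ ENNReal.ofReal |t| < Y.r then h.choose.toFun t
  else L.one

/-- The topology on `L(G)` generated by the subbasic sets `B_{C,U}` for `C ⊆ (-2,2)`
compact and `U ⊆ G` open. -/
instance germTopology (L : LocalGroup G) : TopologicalSpace (LGQuot L) :=
  TopologicalSpace.generateFrom
    {S | ∃ (C : Set ℝ) (U : Set G), IsCompact C ∧ C ⊆ Set.Ioo (-2 : ℝ) 2 ∧ IsOpen U ∧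
      S = {X : LGQuot L | C ⊆ germDomain L X ∧ ∀ t ∈ C, germEval L X t ∈ U}}

/-- A sublocal group `H` of `L`, with associated neighborhood `V`. -/
def IsSublocalGroup (L : LocalGroup G) (H V : Set G) : Prop :=
  L.one ∈ H ∧ IsOpen V ∧ L.one ∈ V ∧ H ⊆ V ∧ (∀ x ∈ closure H, x ∈ V → x ∈ H) ∧
    (∀ x ∈ H, x ∈ L.Lambda → L.inv x ∈ V → L.inv x ∈ H) ∧
    ∀ x ∈ H, ∀ y ∈ H, (x, y) ∈ L.Omega → L.mul x y ∈ V → L.mul x y ∈ H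

/-- A normal sublocal group `H` of `L`, with normalizing neighborhood `V`. -/
def IsNormalSublocalGroup (L : LocalGroup G) (H V : Set G) : Prop :=
  L.IsSublocalGroup H V ∧ L.IsSymmetric V ∧
    ∀ y ∈ V, ∀ x ∈ H, ∀ b : G, L.Represents [y, x, L.inv y] b → b ∈ V → b ∈ H

/-- The coset relation `E_H` on `W`. -/
def quotRel (L : LocalGroup G) (H W : Set G) : ↥W → ↥W → Prop :=
  fun x y => L.mul (L.inv ↑x) ↑y ∈ H

/-- The local coset space `W/E_H`, with the quotient topology. -/
abbrev QuotCarrier (L : LocalGroup G) (H W : Set G) := Quot (L.quotRel H W)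

/-- `Q` is the local quotient group structure `(G/H)_W` on `W/E_H`. -/
def IsQuotStructure (L : LocalGroup G) (H W : Set G) (h1W : L.one ∈ W)
    (Q : LocalGroup (L.QuotCarrier H W)) : Prop :=
  Q.one = Quot.mk (L.quotRel H W) ⟨L.one, h1W⟩ ∧
    Q.Lambda = Set.univ ∧
    (∀ (x : ↥W) (hx : L.inv ↑x ∈ W),
      Q.inv (Quot.mk (L.quotRel H W) x) = Quot.mk (L.quotRel H W) ⟨L.inv ↑x, hx⟩) ∧
    Q.Omega = {q | ∃ x y : ↥W, ((x : G), (y : G)) ∈ L.Omega ∧ L.mul ↑x ↑y ∈ W ∧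
      q = (Quot.mk (L.quotRel H W) x, Quot.mk (L.quotRel H W) y)} ∧
    ∀ (x y : ↥W) (_ : ((x : G), (y : G)) ∈ L.Omega) (hm : L.mul ↑x ↑y ∈ W),
      Q.mul (Quot.mk (L.quotRel H W) x) (Quot.mk (L.quotRel H W) y) =
        Quot.mk (L.quotRel H W) ⟨L.mul ↑x ↑y, hm⟩

/-- The sup-norm of a real-valued function. -/
noncomputable def supNorm (f : G → ℝ) : ℝ := ⨆ x : G, |f x|

/-- `W²` = the set of products of two elements of `W`. -/
def sqSet (L : LocalGroup G) (W : Set G) : Set G :=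
  {z | ∃ a ∈ W, ∃ b ∈ W, (a, b) ∈ L.Omega ∧ L.mul a b = z}

/-- The (left-translation) action `a · f` of `a` on functions supported in `W`:
`(a·f)(x) = f (a⁻¹ x)` for `x ∈ W²` and `0` otherwise. -/
noncomputable def act (L : LocalGroup G) (W : Set G) (a : G) (f : G → ℝ) : G → ℝ := by
  classical exact fun x => if x ∈ L.sqSet W then f (L.mul (L.inv a) x) else 0

/-- `ord(x) ≥ n` relative to the special neighborhood `SU`: all powers `x^k`, `|k| ≤ n`,
are defined and lie in `SU`. -/
def ordGE (L : LocalGroup G) (SU : Set G) (n : ℕ) : Set G :=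
  {x | ∀ k : ℤ, k.natAbs ≤ n → ∃ b : G, L.zpowRep x k b ∧ b ∈ SU}

end LocalGroup

open LocalGroup

/-! If squaring were not injective near `1`, there would be `x, y → 1` with `x² = y²` and
`x ≠ y`; then `a = x⁻¹y` satisfies `a → 1`, `a ≠ 1` and `xa = a⁻¹x`. Fix a compact symmetric
neighbourhood `K` of `1` containing no nontrivial subgroup. The powers of `a` form a subgroup as
long as they stay in `K`, so they must leave `K`, first at `a^(N+1)` say. Along an ultrafilter,
`a^N → b` and `a^⌊N/2⌋ → c`, where `b ≠ 1` since `a^(N+1) → b` stays outside `K`, and `c² = b`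
since `a → 1`. But conjugating by `x → 1` inverts the powers of `a`, so `c = c⁻¹` and
`b = c² = 1`. -/

open Filter Set Topology

lemma IsCompact.exists_tendsto_of_eventually_mem {X α : Type*} [TopologicalSpace X] {K : Set X}
    (hK : IsCompact K) (F : Ultrafilter α) {f : α → X} (hf : ∀ᶠ p in F, f p ∈ K) :
    ∃ b ∈ K, Tendsto f F (𝓝 b) :=
  hK.ultrafilter_le_nhds' (F.map f) hf

namespace LocalGroup

variable {G : Type*} [TopologicalSpace G] {L : LocalGroup G}

def npow (L : LocalGroup G) (a : G) : ℕ → G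
  | 0 => L.one
  | n + 1 => L.mul (L.npow a n) a

lemma npow_zero (L : LocalGroup G) (a : G) : L.npow a 0 = L.one := rfl

lemma npow_succ (L : LocalGroup G) (a : G) (n : ℕ) :
    L.npow a (n + 1) = L.mul (L.npow a n) a := rfl

lemma npow_one (L : LocalGroup G) (a : G) : L.npow a 1 = a := L.one_mul a

lemma inv_one (L : LocalGroup G) : L.inv L.one = L.one := by
  simpa only [L.one_mul] using L.mul_inv_self L.one L.one_mem_Lambda

lemma tendsto_mul_of_mem_Omega (L : LocalGroup G) {α : Type*} {F : Filter α} {f g : α → G}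
    {u v : G} (huv : (u, v) ∈ L.Omega) (hf : Tendsto f F (𝓝 u)) (hg : Tendsto g F (𝓝 v)) :
    Tendsto (fun p => L.mul (f p) (g p)) F (𝓝 (L.mul u v)) :=
  ((L.continuousOn_mul.continuousAt (L.isOpen_Omega.mem_nhds huv)).tendsto).comp
    (hf.prodMk_nhds hg)

structure IsSymmetricMulDomain (L : LocalGroup G) (U : Set G) : Prop where
  mem_Omega : ∀ u ∈ U, ∀ v ∈ U, (u, v) ∈ L.Omega
  inv_mem : ∀ u ∈ U, L.inv u ∈ U

lemma IsProdChain.isSymmetricMulDomain {U : ℕ → Set G} (hU : L.IsProdChain U) :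
    L.IsSymmetricMulDomain (U 2) where
  mem_Omega u hu v hv := by
    obtain ⟨b, hb⟩ := (hU 2 one_le_two).2.2.2.2 [u, v] rfl (by simp [hu, hv])
    rw [Represents] at hb
    obtain ⟨b₁, b₂, hb₁, hb₂, huv, -⟩ := hb 1 le_rfl (by simp)
    simp only [List.take, List.drop, Represents] at hb₁ hb₂
    exact hb₁ ▸ hb₂ ▸ huv
  inv_mem u hu := (hU 2 one_le_two).2.2.1.2 ▸ mem_image_of_mem L.inv hu

namespace Std

variable (hstd : L.Std)
include hstd

lemma mem_Lambda (x : G) : x ∈ L.Lambda := hstd.1 ▸ mem_univ x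

lemma continuous_inv : Continuous L.inv := by
  rw [← continuousOn_univ, ← hstd.1]
  exact L.continuousOn_inv

lemma mul_inv_cancel_right {x a : G} (h₁ : (x, a) ∈ L.Omega)
    (h₂ : (L.mul x a, L.inv a) ∈ L.Omega) : L.mul (L.mul x a) (L.inv a) = x := by
  have h := L.assoc x a (L.inv a) h₁ (L.mem_inv_right a (hstd.mem_Lambda a)) h₂
    (by rw [L.mul_inv_self a (hstd.mem_Lambda a)]; exact L.pair_one_right x)
  rwa [L.mul_inv_self a (hstd.mem_Lambda a), L.mul_one] at h

lemma inv_mul_cancel_left {a x : G} (h₁ : (a, x) ∈ L.Omega)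
    (h₂ : (L.inv a, L.mul a x) ∈ L.Omega) : L.mul (L.inv a) (L.mul a x) = x := by
  have h := L.assoc (L.inv a) a x (L.mem_inv_left a (hstd.mem_Lambda a)) h₁
    (by rw [L.inv_mul_self a (hstd.mem_Lambda a)]; exact L.pair_one_left x) h₂
  rwa [L.inv_mul_self a (hstd.mem_Lambda a), L.one_mul, eq_comm] at h

lemma mul_inv_cancel_left {a x : G} (h₁ : (L.inv a, x) ∈ L.Omega)
    (h₂ : (a, L.mul (L.inv a) x) ∈ L.Omega) : L.mul a (L.mul (L.inv a) x) = x := by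
  have h := L.assoc a (L.inv a) x (L.mem_inv_right a (hstd.mem_Lambda a)) h₁
    (by rw [L.mul_inv_self a (hstd.mem_Lambda a)]; exact L.pair_one_left x) h₂
  rwa [L.mul_inv_self a (hstd.mem_Lambda a), L.one_mul, eq_comm] at h

lemma inv_inv (a : G) : L.inv (L.inv a) = a := by
  have h := hstd.inv_mul_cancel_left (L.mem_inv_left a (hstd.mem_Lambda a))
    (by rw [L.inv_mul_self a (hstd.mem_Lambda a)]; exact L.pair_one_right _)
  rwa [L.inv_mul_self a (hstd.mem_Lambda a), L.mul_one] at h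

end Std

lemma exists_npow_mem_of_le_and_npow_succ_not_mem {K : Set G} (h1 : L.one ∈ K) {a : G}
    (h : ∃ n, L.npow a n ∉ K) : ∃ N, (∀ j ≤ N, L.npow a j ∈ K) ∧ L.npow a (N + 1) ∉ K := by
  classical
  have hpos : Nat.find h ≠ 0 := fun h0 => Nat.find_spec h (h0 ▸ h1)
  refine ⟨Nat.find h - 1, fun j hj => ?_, ?_⟩
  · exact not_not.mp (Nat.find_min h (by omega))
  · rw [Nat.sub_add_cancel (Nat.one_le_iff_ne_zero.mpr hpos)]
    exact Nat.find_spec h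

def powers (L : LocalGroup G) (a : G) : Set G :=
  range (L.npow a) ∪ range (L.npow (L.inv a))

namespace IsSymmetricMulDomain

variable {U : Set G} (hU : L.IsSymmetricMulDomain U) {a : G}
include hU

lemma mul_npow_eq_npow_succ (ha : a ∈ U) {m : ℕ} (hpow : ∀ j ≤ m, L.npow a j ∈ U) :
    L.mul a (L.npow a m) = L.npow a (m + 1) := by
  induction m with
  | zero => rw [L.npow_zero, L.mul_one, L.npow_one]
  | succ n ih =>
    have ih := ih fun j hj => hpow j (hj.trans n.le_succ)
    have hn := hpow n n.le_succ
    have hn₁ := hpow (n + 1) le_rfl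
    rw [L.npow_succ a n, ← L.assoc a _ a (hU.mem_Omega a ha _ hn) (hU.mem_Omega _ hn a ha)
      (by rw [ih]; exact hU.mem_Omega _ hn₁ a ha)
      (by rw [← L.npow_succ]; exact hU.mem_Omega a ha _ hn₁),
      ih, L.npow_succ a (n + 1)]

lemma npow_mul_npow (ha : a ∈ U) (m n : ℕ) (hpow : ∀ j ≤ m + n, L.npow a j ∈ U) :
    L.mul (L.npow a m) (L.npow a n) = L.npow a (m + n) := by
  induction n with
  | zero => exact L.mul_one _
  | succ n ih =>
    have ih := ih fun j hj => hpow j (hj.trans (Nat.le_succ _))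
    have hm := hpow m (by omega)
    have hn := hpow n (by omega)
    rw [L.npow_succ a n, ← L.assoc _ _ a (hU.mem_Omega _ hm _ hn) (hU.mem_Omega _ hn a ha)
      (by rw [ih]; exact hU.mem_Omega _ (hpow _ (by omega)) a ha)
      (by rw [← L.npow_succ]; exact hU.mem_Omega _ hm _ (hpow _ (by omega))), ih]
    rfl

lemma inv_npow (hstd : L.Std) (ha : a ∈ U) {m : ℕ} (hpow : ∀ j ≤ m, L.npow a j ∈ U) :
    L.inv (L.npow a m) = L.npow (L.inv a) m := by
  induction m using Nat.strong_induction_on with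
  | _ m ih =>
    cases m with
    | zero => exact L.inv_one
    | succ n =>
      have ih' : ∀ j ≤ n, L.inv (L.npow a j) = L.npow (L.inv a) j := fun j hj =>
        ih j (by omega) fun i hi => hpow i (by omega)
      rw [L.npow_succ, (hstd.2 _ _ (hU.mem_Omega _ (hpow n (by omega)) a ha)).2, ih' n le_rfl,
        hU.mul_npow_eq_npow_succ (hU.inv_mem a ha)
          fun j hj => ih' j hj ▸ hU.inv_mem _ (hpow j (by omega))]

lemma npow_inv_mem (hstd : L.Std) (ha : a ∈ U) {m : ℕ} (hpow : ∀ j ≤ m, L.npow a j ∈ U) :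
    L.npow (L.inv a) m ∈ U :=
  hU.inv_npow hstd ha hpow ▸ hU.inv_mem _ (hpow m le_rfl)

lemma npow_mul_npow_inv (hstd : L.Std) (ha : a ∈ U) (hpow : ∀ j, L.npow a j ∈ U) (m n : ℕ) :
    L.mul (L.npow a m) (L.npow (L.inv a) n) =
      if n ≤ m then L.npow a (m - n) else L.npow (L.inv a) (n - m) := by
  have hpow' : ∀ j, L.npow (L.inv a) j ∈ U := fun j =>
    hU.npow_inv_mem hstd ha fun i _ => hpow i
  have hia : L.inv a ∈ U := hU.inv_mem a ha
  induction n generalizing m with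
  | zero => simpa [L.npow_zero] using L.mul_one _
  | succ n ih =>
    cases m with
    | zero => simpa [L.npow_zero] using L.one_mul _
    | succ m =>
      have hq : L.mul (L.inv a) (L.npow (L.inv a) n) = L.npow (L.inv a) (n + 1) :=
        hU.mul_npow_eq_npow_succ hia fun i _ => hpow' i
      have hcancel : L.mul a (L.npow (L.inv a) (n + 1)) = L.npow (L.inv a) n := by
        rw [← hq]
        exact hstd.mul_inv_cancel_left (hU.mem_Omega _ hia _ (hpow' n))
          (by rw [hq]; exact hU.mem_Omega a ha _ (hpow' _))
      rw [L.npow_succ a m, L.assoc _ a _ (hU.mem_Omega _ (hpow m) a ha)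
        (hU.mem_Omega a ha _ (hpow' _)) (hU.mem_Omega _ (hpow (m + 1)) _ (hpow' (n + 1)))
        (by rw [hcancel]; exact hU.mem_Omega _ (hpow m) _ (hpow' n)), hcancel, ih]
      split_ifs <;> first | omega | rfl | (congr 1; omega)

lemma isSubgroup_powers (hstd : L.Std) (ha : a ∈ U) (hpow : ∀ j, L.npow a j ∈ U) :
    L.IsSubgroup (L.powers a) := by
  have hia : L.inv a ∈ U := hU.inv_mem a ha
  have hpow' : ∀ j, L.npow (L.inv a) j ∈ U := fun j =>
    hU.npow_inv_mem hstd ha fun i _ => hpow i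
  have hsub : L.powers a ⊆ U := by
    rintro _ (⟨n, rfl⟩ | ⟨n, rfl⟩)
    exacts [hpow n, hpow' n]
  have hinv_inv := hstd.inv_inv a
  refine ⟨Or.inl ⟨0, rfl⟩, fun x _ => hstd.mem_Lambda x,
    fun x hx y hy => hU.mem_Omega x (hsub hx) y (hsub hy), ?_, ?_⟩
  · rintro _ (⟨n, rfl⟩ | ⟨n, rfl⟩)
    · exact Or.inr ⟨n, (hU.inv_npow hstd ha fun i _ => hpow i).symm⟩
    · refine Or.inl ⟨n, ?_⟩
      rw [hU.inv_npow hstd hia fun i _ => hpow' i, hinv_inv]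
  · rintro _ (⟨m, rfl⟩ | ⟨m, rfl⟩) _ (⟨n, rfl⟩ | ⟨n, rfl⟩)
    · exact Or.inl ⟨m + n, (hU.npow_mul_npow ha m n fun j _ => hpow j).symm⟩
    · rw [hU.npow_mul_npow_inv hstd ha hpow]
      split
      exacts [Or.inl ⟨_, rfl⟩, Or.inr ⟨_, rfl⟩]
    · have h := hU.npow_mul_npow_inv hstd hia hpow' m n
      rw [hinv_inv] at h
      rw [h]
      split
      exacts [Or.inr ⟨_, rfl⟩, Or.inl ⟨_, rfl⟩]
    · exact Or.inr ⟨m + n, (hU.npow_mul_npow hia m n fun j _ => hpow' j).symm⟩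

section

variable (hstd : L.Std)
include hstd

lemma eq_one_of_forall_npow_mem {K : Set G} (hKU : K ⊆ U) (hKsym : ∀ k ∈ K, L.inv k ∈ K)
    (hK : ∀ H : Set G, L.IsSubgroup H → H ⊆ K → H = {L.one}) (hpow : ∀ n, L.npow a n ∈ K) :
    a = L.one := by
  have ha : a ∈ U := hKU (L.npow_one a ▸ hpow 1)
  have hsub : L.powers a ⊆ K := by
    rintro _ (⟨n, rfl⟩ | ⟨n, rfl⟩)
    · exact hpow n
    · exact hU.inv_npow hstd ha (fun j _ => hKU (hpow j)) ▸ hKsym _ (hpow n)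
  have hmem : a ∈ L.powers a := Or.inl ⟨1, L.npow_one a⟩
  rwa [hK _ (hU.isSubgroup_powers hstd ha fun j => hKU (hpow j)) hsub] at hmem

lemma npow_half_mul_self (ha : a ∈ U) {n : ℕ} (hpow : ∀ j ≤ n, L.npow a j ∈ U) :
    L.mul (L.npow a (n / 2)) (L.npow a (n / 2)) = L.npow a n ∨
      L.mul (L.npow a (n / 2)) (L.npow a (n / 2)) = L.mul (L.npow a n) (L.inv a) := by
  rw [hU.npow_mul_npow ha _ _ fun j hj => hpow j (by omega)]
  rcases Nat.even_or_odd' n with ⟨k, rfl | rfl⟩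
  · left
    congr 1
    omega
  · right
    rw [show (2 * k + 1) / 2 + (2 * k + 1) / 2 = 2 * k by omega, L.npow_succ,
      hstd.mul_inv_cancel_right (hU.mem_Omega _ (hpow _ (by omega)) a ha)
        (hU.mem_Omega _ (hpow _ le_rfl) _ (hU.inv_mem a ha))]

/-- With `a = x⁻¹y` we have `y = xa`, so `x² = y²` reads `x = axa`. -/
lemma mul_eq_inv_mul_of_mul_self_eq {x y : G} (hx : x ∈ U) (hy : y ∈ U)
    (hxx : L.mul x x ∈ U) (ha : L.mul (L.inv x) y ∈ U) (hsq : L.mul x x = L.mul y y) :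
    L.mul x (L.mul (L.inv x) y) = L.mul (L.inv (L.mul (L.inv x) y)) x := by
  have hix : L.inv x ∈ U := hU.inv_mem x hx
  have hxa : L.mul x (L.mul (L.inv x) y) = y :=
    hstd.mul_inv_cancel_left (hU.mem_Omega _ hix y hy) (hU.mem_Omega x hx _ ha)
  have hay : L.mul (L.mul (L.inv x) y) y = x := by
    rw [L.assoc _ y y (hU.mem_Omega _ hix y hy) (hU.mem_Omega y hy y hy)
      (hU.mem_Omega _ ha y hy) (by rw [← hsq]; exact hU.mem_Omega _ hix _ hxx), ← hsq,
      hstd.inv_mul_cancel_left (hU.mem_Omega x hx x hx) (hU.mem_Omega _ hix _ hxx)]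
  have hiax : L.mul (L.inv (L.mul (L.inv x) y)) x = y := by
    have h := hstd.inv_mul_cancel_left (hU.mem_Omega _ ha y hy)
      (by rw [hay]; exact hU.mem_Omega _ (hU.inv_mem _ ha) x hx)
    rwa [hay] at h
  rw [hxa, hiax]

lemma mul_npow_eq_inv_npow_mul {K : Set G} (hKK : ∀ k ∈ K, ∀ k' ∈ K, L.mul k k' ∈ U)
    (hKU : K ⊆ U) (hKsym : ∀ k ∈ K, L.inv k ∈ K) {x : G} (hx : x ∈ K) (ha : a ∈ K)
    (hrel : L.mul x a = L.mul (L.inv a) x) {M : ℕ} (hpow : ∀ j ≤ M, L.npow a j ∈ K) :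
    ∀ m ≤ M, L.mul x (L.npow a m) = L.mul (L.inv (L.npow a m)) x := by
  have ha' : a ∈ U := hKU ha
  have hinv : ∀ j ≤ M, L.inv (L.npow a j) = L.npow (L.inv a) j := fun j hj =>
    hU.inv_npow hstd ha' fun i hi => hKU (hpow i (by omega))
  have hinvK : ∀ j ≤ M, L.npow (L.inv a) j ∈ K := fun j hj =>
    hinv j hj ▸ hKsym _ (hpow j hj)
  intro m hm
  rw [hinv m hm]
  induction m with
  | zero => rw [L.npow_zero, L.npow_zero, L.mul_one, L.one_mul]
  | succ n ih =>
    have ih := ih (by omega)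
    have hn := hpow n (by omega)
    have hn' := hinvK n (by omega)
    have hia : L.inv a ∈ U := hU.inv_mem a ha'
    rw [L.npow_succ, L.npow_succ,
      ← L.assoc x _ a (hU.mem_Omega x (hKU hx) _ (hKU hn)) (hU.mem_Omega _ (hKU hn) a ha')
        (by rw [ih]; exact hU.mem_Omega _ (hKK _ hn' x hx) a ha')
        (hU.mem_Omega x (hKU hx) _ (hKU (hpow _ hm))), ih,
      L.assoc _ x a (hU.mem_Omega _ (hKU hn') x (hKU hx)) (hU.mem_Omega x (hKU hx) a ha')
        (hU.mem_Omega _ (hKK _ hn' x hx) a ha') (hU.mem_Omega _ (hKU hn') _ (hKK x hx a ha)),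
      hrel, L.assoc _ (L.inv a) x (hU.mem_Omega _ (hKU hn') _ hia) (hU.mem_Omega _ hia x (hKU hx))
        (hU.mem_Omega _ (hKU (hinvK _ hm)) x (hKU hx))
        (by rw [← hrel]; exact hU.mem_Omega _ (hKU hn') _ (hKK x hx a ha))]

end

end IsSymmetricMulDomain

variable [T2Space G]

lemma NSS.exists_isCompact_symmetric_nhds [LocallyCompactSpace G] (hNSS : L.NSS)
    (hstd : L.Std) {U : Set G} (hU : U ∈ 𝓝 L.one) :
    ∃ K : Set G, IsCompact K ∧ K ∈ 𝓝 L.one ∧ (∀ k ∈ K, ∀ k' ∈ K, L.mul k k' ∈ U) ∧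
      (∀ k ∈ K, L.inv k ∈ K) ∧ ∀ H : Set G, L.IsSubgroup H → H ⊆ K → H = {L.one} := by
  obtain ⟨U₀, hU₀, hU₀sub⟩ := hNSS
  have hmul : ∀ᶠ q in 𝓝 L.one ×ˢ 𝓝 L.one, L.mul q.1 q.2 ∈ U := by
    rw [← nhds_prod_eq]
    exact (L.continuousOn_mul.continuousAt (L.isOpen_Omega.mem_nhds (L.pair_one_left L.one))
      ).eventually_mem (by rwa [L.one_mul])
  obtain ⟨W, hW, hWmul⟩ := (eventually_prod_self_iff (r := fun x y => L.mul x y ∈ U)).mp hmul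
  obtain ⟨K₀, hK₀, hK₀sub, hK₀c⟩ := local_compact_nhds (inter_mem hW hU₀)
  refine ⟨K₀ ∩ L.inv ⁻¹' K₀, hK₀c.inter_right (hK₀c.isClosed.preimage hstd.continuous_inv),
    inter_mem hK₀ (hstd.continuous_inv.continuousAt.preimage_mem_nhds (by rwa [L.inv_one])),
    fun k hk k' hk' => hWmul k (hK₀sub hk.1).1 k' (hK₀sub hk'.1).1,
    fun k hk => ⟨hk.2, by rw [mem_preimage, hstd.inv_inv]; exact hk.1⟩,
    fun H hH hHK => hU₀sub H hH fun h hh => (hK₀sub (hHK hh).1).2⟩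

lemma Std.mul_self_eq_one_of_tendsto (hstd : L.Std) {α : Type*} {F : Filter α} [F.NeBot]
    {x g : α → G} {c : G} (hx : Tendsto x F (𝓝 L.one)) (hg : Tendsto g F (𝓝 c))
    (hrel : ∀ᶠ p in F, L.mul (x p) (g p) = L.mul (L.inv (g p)) (x p)) :
    L.mul c c = L.one := by
  have hxg := L.tendsto_mul_of_mem_Omega (L.pair_one_left c) hx hg
  have hgx := L.tendsto_mul_of_mem_Omega (L.pair_one_right (L.inv c))
    ((hstd.continuous_inv.tendsto c).comp hg) hx
  rw [L.one_mul] at hxg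
  rw [L.mul_one] at hgx
  have hc : c = L.inv c := tendsto_nhds_unique (hxg.congr' hrel) hgx
  nth_rw 2 [hc]
  exact L.mul_inv_self c (hstd.mem_Lambda c)

namespace IsSymmetricMulDomain

variable {U : Set G} (hU : L.IsSymmetricMulDomain U) (hstd : L.Std)
include hU hstd

lemma exists_tendsto_npow_half {K : Set G} (hK : IsCompact K) (hKn : K ∈ 𝓝 L.one)
    (hKU : K ⊆ U) {α : Type*} (F : Ultrafilter α) {a : α → G} {N : α → ℕ}
    (ha : Tendsto a F (𝓝 L.one)) (hin : ∀ᶠ p in F, ∀ j ≤ N p, L.npow (a p) j ∈ K)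
    (hout : ∀ᶠ p in F, L.npow (a p) (N p + 1) ∉ K) :
    ∃ c, Tendsto (fun p => L.npow (a p) (N p / 2)) F (𝓝 c) ∧ L.mul c c ≠ L.one := by
  obtain ⟨b, -, hb⟩ := hK.exists_tendsto_of_eventually_mem F (hin.mono fun p hp => hp (N p) le_rfl)
  obtain ⟨c, hcK, hc⟩ := hK.exists_tendsto_of_eventually_mem F
    (hin.mono fun p hp => hp (N p / 2) (Nat.div_le_self _ _))
  refine ⟨c, hc, fun hc₁ => ?_⟩
  have hsucc : Tendsto (fun p => L.npow (a p) (N p + 1)) F (𝓝 b) := by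
    have h := L.tendsto_mul_of_mem_Omega (L.pair_one_right b) hb ha
    rwa [L.mul_one] at h
  have hpred : Tendsto (fun p => L.mul (L.npow (a p) (N p)) (L.inv (a p))) F (𝓝 b) := by
    have h := L.tendsto_mul_of_mem_Omega (by rw [L.inv_one]; exact L.pair_one_right b) hb
      ((hstd.continuous_inv.tendsto _).comp ha)
    rwa [L.inv_one, L.mul_one] at h
  have hhalf := hin.and (ha.eventually_mem (mem_of_superset hKn hKU))
  have hsq : Tendsto (fun p => L.mul (L.npow (a p) (N p / 2)) (L.npow (a p) (N p / 2))) F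
      (𝓝 b) := by
    rcases Ultrafilter.eventually_or.mp (hhalf.mono fun p hp =>
      hU.npow_half_mul_self hstd hp.2 fun j hj => hKU (hp.1 j hj)) with h | h
    exacts [hb.congr' (h.mono fun _ => Eq.symm), hpred.congr' (h.mono fun _ => Eq.symm)]
  have hcc : L.mul c c = b :=
    tendsto_nhds_unique (L.tendsto_mul_of_mem_Omega (hU.mem_Omega c (hKU hcK) c (hKU hcK)) hc hc)
      hsq
  obtain ⟨p, hpK, hpK'⟩ := ((hsucc.eventually_mem (hcc ▸ hc₁ ▸ hKn)).and hout).exists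
  exact hpK' hpK

lemma eventually_eq_one_of_mul_eq_inv_mul {K : Set G} (hK : IsCompact K) (hKn : K ∈ 𝓝 L.one)
    (hKK : ∀ k ∈ K, ∀ k' ∈ K, L.mul k k' ∈ U) (hKsym : ∀ k ∈ K, L.inv k ∈ K)
    (hKsub : ∀ H : Set G, L.IsSubgroup H → H ⊆ K → H = {L.one}) {α : Type*} (F : Ultrafilter α)
    {x a : α → G} (hx : Tendsto x F (𝓝 L.one)) (ha : Tendsto a F (𝓝 L.one))
    (hrel : ∀ᶠ p in F, L.mul (x p) (a p) = L.mul (L.inv (a p)) (x p)) :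
    ∀ᶠ p in F, a p = L.one := by
  have h1K : L.one ∈ K := mem_of_mem_nhds hKn
  have hKU : K ⊆ U := fun k hk => L.mul_one k ▸ hKK k hk _ h1K
  have hesc : ∀ b, b ≠ L.one → ∃ N, (∀ j ≤ N, L.npow b j ∈ K) ∧ L.npow b (N + 1) ∉ K :=
    fun b hb => exists_npow_mem_of_le_and_npow_succ_not_mem h1K <| by
      by_contra! h
      exact hb (hU.eq_one_of_forall_npow_mem hstd hKU hKsym hKsub h)
  choose! N hNin hNout using hesc
  by_contra h
  have hne : ∀ᶠ p in F, a p ≠ L.one := Ultrafilter.eventually_not.mpr h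
  obtain ⟨c, hc, hcc⟩ := hU.exists_tendsto_npow_half hstd hK hKn hKU F (N := fun p => N (a p)) ha
    (hne.mono fun p hp => hNin _ hp) (hne.mono fun p hp => hNout _ hp)
  refine hcc (hstd.mul_self_eq_one_of_tendsto hx hc ?_)
  filter_upwards [hne, hx.eventually_mem hKn, ha.eventually_mem hKn, hrel] with p hp hxp hap hrelp
  exact hU.mul_npow_eq_inv_npow_mul hstd hKK hKU hKsym hxp hap hrelp (hNin _ hp) _
    (Nat.div_le_self _ _)

lemma eventually_mul_self_injective {K : Set G} (hK : IsCompact K) (hKn : K ∈ 𝓝 L.one)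
    (hKK : ∀ k ∈ K, ∀ k' ∈ K, L.mul k k' ∈ U) (hKsym : ∀ k ∈ K, L.inv k ∈ K)
    (hKsub : ∀ H : Set G, L.IsSubgroup H → H ⊆ K → H = {L.one}) :
    ∀ᶠ q in 𝓝 L.one ×ˢ 𝓝 L.one, L.mul q.1 q.1 = L.mul q.2 q.2 → q.1 = q.2 := by
  by_contra h
  rw [not_eventually, frequently_iff_neBot] at h
  obtain ⟨F, hF⟩ := exists_ultrafilter_iff.mpr h
  have hF₁ : ↑F ≤ 𝓝 L.one ×ˢ 𝓝 L.one := hF.trans inf_le_left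
  have hx : Tendsto (Prod.fst : G × G → G) F (𝓝 L.one) := tendsto_fst.mono_left hF₁
  have hy : Tendsto (Prod.snd : G × G → G) F (𝓝 L.one) := tendsto_snd.mono_left hF₁
  have hbad : ∀ᶠ q : G × G in F, ¬(L.mul q.1 q.1 = L.mul q.2 q.2 → q.1 = q.2) :=
    le_principal_iff.mp (hF.trans inf_le_right)
  have ha : Tendsto (fun q : G × G => L.mul (L.inv q.1) q.2) F (𝓝 L.one) := by
    have h := L.tendsto_mul_of_mem_Omega (by rw [L.inv_one]; exact L.pair_one_left L.one)
      ((hstd.continuous_inv.tendsto _).comp hx) hy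
    rwa [L.inv_one, L.one_mul] at h
  have hKU : K ⊆ U := fun k hk => L.mul_one k ▸ hKK k hk _ (mem_of_mem_nhds hKn)
  have hxyK := (hx.eventually_mem hKn).and (hy.eventually_mem hKn)
  have hrel := (hbad.and hxyK).mono fun q ⟨hq, hxK, hyK⟩ =>
    hU.mul_eq_inv_mul_of_mul_self_eq hstd (hKU hxK) (hKU hyK) (hKK _ hxK _ hxK)
      (hKK _ (hKsym _ hxK) _ hyK) (Classical.not_imp.mp hq).1
  obtain ⟨q, hq, ⟨hxK, hyK⟩, ha1⟩ := (hbad.and (hxyK.and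
    (hU.eventually_eq_one_of_mul_eq_inv_mul hstd hK hKn hKK hKsym hKsub F hx ha hrel))).exists
  refine (Classical.not_imp.mp hq).2 ?_
  rw [← hstd.mul_inv_cancel_left (hU.mem_Omega _ (hKU (hKsym _ hxK)) _ (hKU hyK))
    (hU.mem_Omega _ (hKU hxK) _ (hKK _ (hKsym _ hxK) _ hyK)), ha1, L.mul_one]

end IsSymmetricMulDomain

end LocalGroup

/-- a locally compact NSS local group has a neighborhood of `1` inside `U₂`
on which squaring is injective. -/
theorem statement_6 {G : Type*} [TopologicalSpace G] [T2Space G] [LocallyCompactSpace G]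
    (L : LocalGroup G) (hstd : L.Std) (Un : ℕ → Set G) (hUn : L.IsProdChain Un)
    (hNSS : L.NSS) :
    ∃ V ∈ 𝓝 L.one, V ⊆ Un 2 ∧ ∀ x ∈ V, ∀ y ∈ V, L.mul x x = L.mul y y → x = y := by
  have hU₂ : Un 2 ∈ 𝓝 L.one := (hUn 2 one_le_two).1.mem_nhds (hUn 2 one_le_two).2.1
  obtain ⟨K, hK, hKn, hKK, hKsym, hKsub⟩ := hNSS.exists_isCompact_symmetric_nhds hstd hU₂
  have hinj := hUn.isSymmetricMulDomain.eventually_mul_self_injective hstd hK hKn hKK hKsym hKsub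
  obtain ⟨V, hV, hVinj⟩ :=
    (eventually_prod_self_iff (r := fun x y => L.mul x x = L.mul y y → x = y)).mp hinj
  exact ⟨V ∩ Un 2, inter_mem hV hU₂, inter_subset_right, fun x hx y hy => hVinj x hx.1 y hy.1⟩
end

section
/- Suppose X : [−1,1] → G is a continuous function such that X([−1,1]) ⊆ U₄ and for all r,s ∈ [−1,1] with r+s ∈ [−1,1], one has (X(r),X(s)) ∈ Ω and X(r+s) = X(r)·X(s). Then there exist ε > 0 and a local one-parameter subgroup X̄ : (−1−ε,1+ε) → G of G such that X̄ restricted to [−1,1] equals X. -/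
open scoped Topology Manifold ENNReal

open LocalGroup

/-!
The extension is `t ↦ X(t/2)²` on `(-2, 2)`. It agrees with `X` on `[-1,1]` since
`X(t/2)² = X(t)`, and it is additive because `a = X(s/2)` and `b = X(t/2)` commute (both
products are `X((s+t)/2)`): as `a, b ∈ U₄`, the products `aabb` and `abab` are defined, so
`(ab)(ab) = a(ba)b = a(ab)b = (aa)(bb)`.
-/

namespace LocalGroup

variable {G : Type*} [TopologicalSpace G] {L : LocalGroup G}

lemma Represents.singleton {a b : G} (h : L.Represents [a] b) : b = a := by
  simpa [Represents] using h

lemma Represents.pair {a b c : G} (h : L.Represents [a, b] c) :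
    (a, b) ∈ L.Omega ∧ L.mul a b = c := by
  rw [Represents] at h
  obtain ⟨b₁, b₂, h₁, h₂, hΩ, hmul⟩ := h 1 le_rfl (by simp)
  rw [h₁.singleton, h₂.singleton] at hΩ hmul
  exact ⟨hΩ, hmul⟩

lemma Represents.triple {a b c d : G} (h : L.Represents [a, b, c] d) :
    L.mul (L.mul a b) c = d := by
  rw [Represents] at h
  obtain ⟨b₁, b₂, h₁, h₂, -, hmul⟩ := h 2 (by norm_num) (by simp)
  rwa [← h₁.pair.2, h₂.singleton] at hmul

lemma Represents.quadruple {a b c d e : G} (h : L.Represents [a, b, c, d] e) :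
    (L.mul a b, L.mul c d) ∈ L.Omega ∧ L.mul (L.mul a b) (L.mul c d) = e ∧
      L.mul a (L.mul (L.mul b c) d) = e := by
  rw [Represents] at h
  obtain ⟨b₁, b₂, h₁, h₂, -, hmul₁⟩ := h 1 le_rfl (by simp)
  obtain ⟨c₁, c₂, h₃, h₄, hΩ, hmul₂⟩ := h 2 (by norm_num) (by simp)
  rw [h₁.singleton, ← h₂.triple] at hmul₁
  rw [← h₃.pair.2, ← h₄.pair.2] at hΩ hmul₂
  exact ⟨hΩ, hmul₂, hmul₁⟩

namespace IsProdChain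

variable {U : ℕ → Set G}

lemma subset_of_le (hU : L.IsProdChain U) {m n : ℕ} (hm : 1 ≤ m) (hmn : m ≤ n) :
    U n ⊆ U m := by
  induction n, hmn using Nat.le_induction with
  | base => exact subset_rfl
  | succ n hmn ih => exact (hU n (hm.trans hmn)).2.2.2.1.trans ih

lemma mem_Omega (hU : L.IsProdChain U) {a b : G} (ha : a ∈ U 2) (hb : b ∈ U 2) :
    (a, b) ∈ L.Omega := by
  obtain ⟨c, hc⟩ := (hU 2 (by norm_num)).2.2.2.2 [a, b] rfl (by simp [ha, hb])
  exact hc.pair.1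

lemma mul_mul_mul_eq (hU : L.IsProdChain U) {a b c d : G} (ha : a ∈ U 4) (hb : b ∈ U 4)
    (hc : c ∈ U 4) (hd : d ∈ U 4) :
    (L.mul a b, L.mul c d) ∈ L.Omega ∧
      L.mul (L.mul a b) (L.mul c d) = L.mul a (L.mul (L.mul b c) d) := by
  obtain ⟨e, he⟩ := (hU 4 (by norm_num)).2.2.2.2 [a, b, c, d] rfl (by simp [ha, hb, hc, hd])
  obtain ⟨hΩ, he₁, he₂⟩ := he.quadruple
  exact ⟨hΩ, he₁.trans he₂.symm⟩

lemma mul_self_mul_mul_self (hU : L.IsProdChain U) {a b : G} (ha : a ∈ U 4) (hb : b ∈ U 4)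
    (hab : L.mul a b = L.mul b a) :
    (L.mul a a, L.mul b b) ∈ L.Omega ∧
      L.mul (L.mul a b) (L.mul a b) = L.mul (L.mul a a) (L.mul b b) := by
  obtain ⟨hΩ, hsq⟩ := hU.mul_mul_mul_eq ha ha hb hb
  refine ⟨hΩ, ?_⟩
  rw [hsq, (hU.mul_mul_mul_eq ha hb ha hb).2, hab]

end IsProdChain

noncomputable def sqHalf (L : LocalGroup G) (X : ℝ → G) (t : ℝ) : G :=
  L.mul (X (t / 2)) (X (t / 2))

def IsOnePSSegment (L : LocalGroup G) (X : ℝ → G) : Prop :=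
  ∀ r s : ℝ, r ∈ Set.Icc (-1 : ℝ) 1 → s ∈ Set.Icc (-1 : ℝ) 1 →
    r + s ∈ Set.Icc (-1 : ℝ) 1 → (X r, X s) ∈ L.Omega ∧ X (r + s) = L.mul (X r) (X s)

lemma half_mem_Icc {t : ℝ} (ht : t ∈ Set.Icc (-2 : ℝ) 2) : t / 2 ∈ Set.Icc (-1 : ℝ) 1 :=
  ⟨by linarith [ht.1], by linarith [ht.2]⟩

lemma IsOnePSSegment.sqHalf_eq {X : ℝ → G} (hX : L.IsOnePSSegment X) {t : ℝ}
    (ht : t ∈ Set.Icc (-1 : ℝ) 1) : L.sqHalf X t = X t := by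
  have hhalf : t / 2 ∈ Set.Icc (-1 : ℝ) 1 := ⟨by linarith [ht.1], by linarith [ht.2]⟩
  have := (hX _ _ hhalf hhalf (by rwa [add_halves])).2
  rwa [add_halves, eq_comm] at this

lemma IsOnePSSegment.sqHalf_add {X : ℝ → G} (hX : L.IsOnePSSegment X) {U : ℕ → Set G}
    (hU : L.IsProdChain U) (himg : ∀ t ∈ Set.Icc (-1 : ℝ) 1, X t ∈ U 4) {s t : ℝ}
    (hs : s ∈ Set.Icc (-2 : ℝ) 2) (ht : t ∈ Set.Icc (-2 : ℝ) 2)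
    (hst : s + t ∈ Set.Icc (-2 : ℝ) 2) :
    (L.sqHalf X s, L.sqHalf X t) ∈ L.Omega ∧
      L.sqHalf X (s + t) = L.mul (L.sqHalf X s) (L.sqHalf X t) := by
  have hs' := half_mem_Icc hs
  have ht' := half_mem_Icc ht
  have hsum : (s + t) / 2 = s / 2 + t / 2 := add_div s t 2
  have hst' : s / 2 + t / 2 ∈ Set.Icc (-1 : ℝ) 1 := hsum ▸ half_mem_Icc hst
  have hmul : X ((s + t) / 2) = L.mul (X (s / 2)) (X (t / 2)) := hsum ▸ (hX _ _ hs' ht' hst').2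
  have hcomm : L.mul (X (s / 2)) (X (t / 2)) = L.mul (X (t / 2)) (X (s / 2)) := by
    rw [← (hX _ _ hs' ht' hst').2, ← (hX _ _ ht' hs' (add_comm (s / 2) _ ▸ hst')).2,
      add_comm]
  obtain ⟨hΩ, hsq⟩ := hU.mul_self_mul_mul_self (himg _ hs') (himg _ ht') hcomm
  unfold sqHalf
  exact ⟨hΩ, by rw [hmul, hsq]⟩

lemma continuousOn_sqHalf {U : ℕ → Set G} (hU : L.IsProdChain U) {X : ℝ → G}
    (hcont : ContinuousOn X (Set.Icc (-1 : ℝ) 1))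
    (himg : ∀ t ∈ Set.Icc (-1 : ℝ) 1, X t ∈ U 2) :
    ContinuousOn (L.sqHalf X) (Set.Icc (-2 : ℝ) 2) := by
  have hhalf : ContinuousOn (fun t : ℝ => X (t / 2)) (Set.Icc (-2 : ℝ) 2) :=
    hcont.comp (continuous_id.div_const 2).continuousOn fun t ht => half_mem_Icc ht
  exact L.continuousOn_mul.comp (hhalf.prodMk hhalf) fun t ht =>
    hU.mem_Omega (himg _ (half_mem_Icc ht)) (himg _ (half_mem_Icc ht))

end LocalGroup

theorem statement_9_general {G : Type*} [TopologicalSpace G]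
    (L : LocalGroup G) (hstd : L.Std) (Un : ℕ → Set G) (hUn : L.IsProdChain Un)
    (X : ℝ → G) (hcont : ContinuousOn X (Set.Icc (-1 : ℝ) 1))
    (himg : ∀ t ∈ Set.Icc (-1 : ℝ) 1, X t ∈ Un 4)
    (hadd : ∀ r s : ℝ, r ∈ Set.Icc (-1 : ℝ) 1 → s ∈ Set.Icc (-1 : ℝ) 1 →
      r + s ∈ Set.Icc (-1 : ℝ) 1 →
      (X r, X s) ∈ L.Omega ∧ X (r + s) = L.mul (X r) (X s)) :
    ∃ ε : ℝ, 0 < ε ∧ ∃ Y : LocalOnePS L, Y.r = ENNReal.ofReal (1 + ε) ∧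
      ∀ t ∈ Set.Icc (-1 : ℝ) 1, Y.toFun t = X t := by
  have hX : L.IsOnePSSegment X := hadd
  have hdom : {t : ℝ | ENNReal.ofReal |t| < ENNReal.ofReal 2} ⊆ Set.Icc (-2) 2 := fun t ht =>
    abs_le.mp ((ENNReal.ofReal_lt_ofReal_iff two_pos).mp ht).le
  have himg₂ : ∀ t ∈ Set.Icc (-1 : ℝ) 1, X t ∈ Un 2 := fun t ht =>
    hUn.subset_of_le (by norm_num) (by norm_num) (himg t ht)
  refine ⟨1, one_pos, ⟨ENNReal.ofReal 2, by norm_num, L.sqHalf X,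
    fun _ _ => hstd.1 ▸ Set.mem_univ _,
    (continuousOn_sqHalf hUn hcont himg₂).mono hdom,
    fun s t hs ht hst => hX.sqHalf_add hUn himg (hdom hs) (hdom ht) (hdom hst)⟩,
    by norm_num, fun t ht => hX.sqHalf_eq ht⟩

/-- extension of a one-parameter "segment" `X : [-1,1] → G` to a local
one-parameter subgroup on `(-1-ε, 1+ε)`. -/
theorem statement_9 {G : Type*} [TopologicalSpace G] [T2Space G]
    (L : LocalGroup G) (hstd : L.Std) (Un : ℕ → Set G) (hUn : L.IsProdChain Un)
    (X : ℝ → G) (hcont : ContinuousOn X (Set.Icc (-1 : ℝ) 1))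
    (himg : ∀ t ∈ Set.Icc (-1 : ℝ) 1, X t ∈ Un 4)
    (hadd : ∀ r s : ℝ, r ∈ Set.Icc (-1 : ℝ) 1 → s ∈ Set.Icc (-1 : ℝ) 1 →
      r + s ∈ Set.Icc (-1 : ℝ) 1 →
      (X r, X s) ∈ L.Omega ∧ X (r + s) = L.mul (X r) (X s)) :
    ∃ ε : ℝ, 0 < ε ∧ ∃ Y : LocalOnePS L, Y.r = ENNReal.ofReal (1 + ε) ∧
      ∀ t ∈ Set.Icc (-1 : ℝ) 1, Y.toFun t = X t :=
  statement_9_general L hstd Un hUn X hcont himg hadd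
end
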